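/- Let G₀ be a group and {G_ℓ}_{ℓ≥0} a group chain in G₀ which is weakly normal: there exists n ≥ 0 such that G_ℓ ⊆ G_n ⊆ N_{G₀}(G_ℓ) for all ℓ ≥ n, where N_{G₀}(G_ℓ) = {g ∈ G₀ : g G_ℓ g⁻¹ = G_ℓ} is the normalizer of G_ℓ in G₀. Then the kernel K = ⋂_{ℓ≥0} G_ℓ is a normal subgroup of G_n, and the set of conjugates {g K g⁻¹ : g ∈ G₀} has at most [G₀ : G_n] elements; in particular K has only finitely many conjugates in G₀. -/

import Mathlib

/-!
The set of conjugates of `K` is the orbit of `K` under conjugation, whose stabilizer is the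
normalizer of `K`; by orbit–stabilizer there are `[G₀ : N(K)]` conjugates. Weak normality
makes `G_n` normalize every `G_ℓ` (for `ℓ < n` because `G_n ≤ G_ℓ`), hence their
intersection `K`, so `G_n ≤ N(K)` gives both the normality of `K` in `G_n` and the bound
`[G₀ : N(K)] ≤ [G₀ : G_n]`.
-/

/-- The conjugate subgroup `g K g⁻¹`. -/
def conjSub {Γ : Type*} [Group Γ] (g : Γ) (K : Subgroup Γ) : Subgroup Γ :=
  K.map (MulAut.conj g).toMonoidHom

open scoped Pointwise
open Subgroup MulAction

section Conjugates

variable {Γ : Type*} [Group Γ]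

theorem conjSub_eq_toConjAct_smul (g : Γ) (K : Subgroup Γ) :
    conjSub g K = ConjAct.toConjAct g • K :=
  rfl

theorem setOf_eq_conjSub_eq_orbit (K : Subgroup Γ) :
    {H : Subgroup Γ | ∃ g : Γ, H = conjSub g K} = orbit (ConjAct Γ) K := by
  ext H
  simp only [Set.mem_ofPred_eq, conjSub_eq_toConjAct_smul, mem_orbit_iff, eq_comm (a := H)]
  exact ConjAct.toConjAct.surjective.exists

theorem comap_toConjAct_stabilizer (K : Subgroup Γ) :
    (stabilizer (ConjAct Γ) K).comap (ConjAct.toConjAct : Γ ≃* ConjAct Γ).toMonoidHom =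
      normalizer (K : Set Γ) := by
  ext g
  exact conjAct_pointwise_smul_iff

theorem ncard_setOf_eq_conjSub (K : Subgroup Γ) :
    {H : Subgroup Γ | ∃ g : Γ, H = conjSub g K}.ncard = (normalizer (K : Set Γ)).index := by
  rw [setOf_eq_conjSub_eq_orbit, ← index_stabilizer, ← comap_toConjAct_stabilizer,
    index_comap_of_surjective _ ConjAct.toConjAct.surjective]

variable {H K : Subgroup Γ} [H.FiniteIndex]

theorem ncard_setOf_eq_conjSub_le_index (hH : H ≤ normalizer (K : Set Γ)) :
    {L : Subgroup Γ | ∃ g : Γ, L = conjSub g K}.ncard ≤ H.index :=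
  ncard_setOf_eq_conjSub K ▸ index_antitone hH

theorem finite_setOf_eq_conjSub (hH : H ≤ normalizer (K : Set Γ)) :
    {L : Subgroup Γ | ∃ g : Γ, L = conjSub g K}.Finite :=
  have := finiteIndex_of_le hH
  Set.finite_of_ncard_ne_zero (ncard_setOf_eq_conjSub K ▸ FiniteIndex.index_ne_zero)

end Conjugates

theorem le_normalizer_iInf_of_antitone {G : Type*} [Group G] {Gc : ℕ → Subgroup G}
    (hanti : Antitone Gc) {n : ℕ} (hn : ∀ ℓ, n ≤ ℓ → Gc n ≤ normalizer (Gc ℓ : Set G)) :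
    Gc n ≤ normalizer ((⨅ ℓ, Gc ℓ : Subgroup G) : Set G) := by
  refine le_trans (le_iInf fun ℓ => ?_) (iInf_normalizer_le_normalizer_iInf Gc)
  rcases le_or_gt n ℓ with h | h
  · exact hn ℓ h
  · exact (hanti h.le).trans le_normalizer

theorem kernel_of_weakly_normal_chain_general
    {G₀ : Type*} [Group G₀] (Gc : ℕ → Subgroup G₀)
    (hdesc : ∀ ℓ, Gc (ℓ + 1) ≤ Gc ℓ)
    (hfi : ∀ ℓ, (Gc ℓ).FiniteIndex)
    (n : ℕ)
    (hwn : ∀ ℓ, n ≤ ℓ → Gc ℓ ≤ Gc n ∧ Gc n ≤ Subgroup.normalizer (Gc ℓ : Set G₀)) :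
    (⨅ ℓ : ℕ, Gc ℓ) ≤ Gc n ∧
    ((⨅ ℓ : ℕ, Gc ℓ).subgroupOf (Gc n)).Normal ∧
    {H : Subgroup G₀ | ∃ g : G₀, H = conjSub g (⨅ ℓ : ℕ, Gc ℓ)}.Finite ∧
    Set.ncard {H : Subgroup G₀ | ∃ g : G₀, H = conjSub g (⨅ ℓ : ℕ, Gc ℓ)} ≤ (Gc n).index := by
  have hKn : (⨅ ℓ, Gc ℓ) ≤ Gc n := iInf_le Gc n
  have hnorm : Gc n ≤ normalizer ((⨅ ℓ, Gc ℓ : Subgroup G₀) : Set G₀) :=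
    le_normalizer_iInf_of_antitone (antitone_nat_of_succ_le hdesc) fun ℓ hℓ => (hwn ℓ hℓ).2
  have := hfi n
  exact ⟨hKn, (normal_subgroupOf_iff_le_normalizer hKn).2 hnorm,
    finite_setOf_eq_conjSub hnorm, ncard_setOf_eq_conjSub_le_index hnorm⟩

/-- **Proposition 5.7.** Let `{G_ℓ}_{ℓ ≥ 0}` be a group chain in `G₀` which is weakly
normal: there exists `n` with `G_ℓ ⊆ G_n ⊆ N_{G₀}(G_ℓ)` for all `ℓ ≥ n`.  Then the kernel
`K = ⋂_ℓ G_ℓ` is a normal subgroup of `G_n`, and the set of conjugates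
`{g K g⁻¹ : g ∈ G₀}` is finite, with at most `[G₀ : G_n]` elements. -/
theorem kernel_of_weakly_normal_chain
    {G₀ : Type*} [Group G₀] (Gc : ℕ → Subgroup G₀)
    (hG0 : Gc 0 = ⊤)
    (hdesc : ∀ ℓ, Gc (ℓ + 1) ≤ Gc ℓ)
    (hfi : ∀ ℓ, (Gc ℓ).FiniteIndex)
    (n : ℕ)
    (hwn : ∀ ℓ, n ≤ ℓ → Gc ℓ ≤ Gc n ∧ Gc n ≤ Subgroup.normalizer (Gc ℓ : Set G₀)) :
    (⨅ ℓ : ℕ, Gc ℓ) ≤ Gc n ∧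
    ((⨅ ℓ : ℕ, Gc ℓ).subgroupOf (Gc n)).Normal ∧
    {H : Subgroup G₀ | ∃ g : G₀, H = conjSub g (⨅ ℓ : ℕ, Gc ℓ)}.Finite ∧
    Set.ncard {H : Subgroup G₀ | ∃ g : G₀, H = conjSub g (⨅ ℓ : ℕ, Gc ℓ)} ≤ (Gc n).index :=
  kernel_of_weakly_normal_chain_general Gc hdesc hfi n hwn
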